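/- Let n ≥ 2. The layered-form representation of a nested canalizing function is unique: if M₁(M₂(⋯(M_{r−1}(M_r ⊕ 1) ⊕ 1)⋯) ⊕ 1) ⊕ b and M'₁(M'₂(⋯(M'_{r'−1}(M'_{r'} ⊕ 1) ⊕ 1)⋯) ⊕ 1) ⊕ b' are two layered-form representations (each with pairwise disjoint extended monomials covering all n variables, layer sizes ≥ 1 except the last layer of size ≥ 2) defining the same function f : 𝔽₂ⁿ → 𝔽₂, then r = r', b = b', and M_i = M'_i for all i = 1,…,r. -/

import Mathlib

/-- `f` is nested canalizing in the variable order `σ(0), σ(1), …, σ(n-1)`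
with canalizing input values `a` and canalized output values `b`:
`f x = b k` whenever `x (σ j) = a j + 1` for all `j < k` and `x (σ k) = a k`,
and `f x = b (last) + 1` whenever `x (σ j) = a j + 1` for all `j`. -/
def IsNCF {n : ℕ} (f : (Fin n → ZMod 2) → ZMod 2) (σ : Equiv.Perm (Fin n))
    (a b : Fin n → ZMod 2) : Prop :=
  (∀ (k : Fin n) (x : Fin n → ZMod 2),
      (∀ j : Fin n, j < k → x (σ j) = a j + 1) → x (σ k) = a k → f x = b k) ∧
  (∀ k : Fin n, (∀ j : Fin n, j ≤ k) →
      ∀ x : Fin n → ZMod 2, (∀ j : Fin n, x (σ j) = a j + 1) → f x = b k + 1)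

/-- The nested expression `M i * (M (i+1) * ( … * (M (i+t-1) + 1) … ) + 1)`
with `t` factors, i.e. `nestVal M t i = Mᵢ(M_{i+1}(⋯(M_{i+t-1} ⊕ 1)⋯) ⊕ 1)`. -/
def nestVal (M : ℕ → ZMod 2) : ℕ → ℕ → ZMod 2
  | 0, _ => 0
  | 1, i => M i
  | (t + 2), i => M i * (nestVal M (t + 1) (i + 1) + 1)

/-- The extended monomial of the `i`-th layer, given the layer assignment `L`
and the complemented inputs `a`:  `Mᵢ(x) = ∏_{L j = i} (x j ⊕ a j)`. -/
def layerMon {n r : ℕ} (L : Fin n → Fin r) (a : Fin n → ZMod 2) (i : ℕ)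
    (x : Fin n → ZMod 2) : ZMod 2 :=
  ∏ j ∈ Finset.univ.filter (fun j : Fin n => (L j : ℕ) = i), (x j + a j)

/-- `kᵢ`, the number of variables in the `i`-th layer. -/
def layerSize {n r : ℕ} (L : Fin n → Fin r) (i : ℕ) : ℕ :=
  (Finset.univ.filter (fun j : Fin n => (L j : ℕ) = i)).card

/-- `K_l = k₀ + k₁ + ⋯ + k_{l-1}`, the number of variables in the first `l` layers. -/
def layerSum {n r : ℕ} (L : Fin n → Fin r) (l : ℕ) : ℕ :=
  ∑ i ∈ Finset.range l, layerSize L i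

/-- `f` is given in the layered form
`f = M₁(M₂(⋯(M_{r−1}(M_r ⊕ 1) ⊕ 1)⋯) ⊕ 1) ⊕ b`, where the `Mᵢ` are extended
monomials in pairwise disjoint sets of variables comprising all `n` variables
(the variable set of `Mᵢ` being the `i`-th layer `{j | L j = i}`), every layer
is nonempty, and the last layer has at least two variables. -/
def IsLayeredForm {n r : ℕ} (f : (Fin n → ZMod 2) → ZMod 2)
    (L : Fin n → Fin r) (a : Fin n → ZMod 2) (b : ZMod 2) : Prop :=
  1 ≤ r ∧
  (∀ i : Fin r, 1 ≤ layerSize L (i : ℕ)) ∧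
  2 ≤ layerSize L (r - 1) ∧
  ∀ x : Fin n → ZMod 2, f x = nestVal (fun i => layerMon L a i x) r 0 + b

/-!
The constant `b` is the value of `f` at a point where both nested expressions vanish, and such
a point exists. The monomials are then peeled off from the outside. Write `Nₛ = Mₛ(Nₛ₊₁ ⊕ 1)`
for the nested expression formed by the layers `s, s+1, …`. A variable lies in layer `s`
exactly when it takes the same value (namely `aⱼ ⊕ 1`) at every point with `Nₛ = 1`: one
direction because `Nₛ = 1` forces `Mₛ = 1`, the other because any variable outside layer `s`
can be prescribed freely at a point with `Nₛ = 1`. This freedom needs every layer to be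
nonempty and the last one to have two variables (otherwise `M(M' ⊕ 1)` with `M'` a single
literal would collapse into one monomial). So `Nₛ` determines layer `s`, the complementation
`a` there, hence `Mₛ`; and `Nₛ₊₁ = Nₛ ⊕ 1` wherever `Mₛ = 1`, which determines `Nₛ₊₁`.
-/

section Layers

variable {n r : ℕ} {L : Fin n → Fin r} {a : Fin n → ZMod 2}

lemma nestVal_succ (M : ℕ → ZMod 2) (t i : ℕ) :
    nestVal M (t + 1) i = M i * (nestVal M t (i + 1) + 1) := by
  cases t with
  | zero => simp [nestVal]
  | succ t => rfl

lemma nestVal_congr {M M' : ℕ → ZMod 2} {t s : ℕ}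
    (h : ∀ i, s ≤ i → i < s + t → M i = M' i) : nestVal M t s = nestVal M' t s := by
  induction t generalizing s with
  | zero => rfl
  | succ t ih =>
    rw [nestVal_succ, nestVal_succ, h s le_rfl (by omega),
      ih fun i h₁ h₂ => h i (by omega) (by omega)]

def IsLayering (L : Fin n → Fin r) : Prop :=
  (∀ i : Fin r, 1 ≤ layerSize L (i : ℕ)) ∧ 2 ≤ layerSize L (r - 1)

lemma IsLayering.exists_mem (hL : IsLayering L) {i : ℕ} (hi : i < r) :
    ∃ j, (L j : ℕ) = i := by
  obtain ⟨j, hj⟩ := Finset.card_pos.mp (hL.1 ⟨i, hi⟩)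
  exact ⟨j, (Finset.mem_filter.mp hj).2⟩

lemma IsLayering.exists_ne_of_last (hL : IsLayering L) {j : Fin n} (hj : (L j : ℕ) = r - 1) :
    ∃ m, (L m : ℕ) = (L j : ℕ) ∧ m ≠ j := by
  obtain ⟨m, hm, hmj⟩ := Finset.exists_mem_ne (hj ▸ hL.2) j
  exact ⟨m, (Finset.mem_filter.mp hm).2, hmj⟩

lemma layerMon_eq_one_iff {i : ℕ} {x : Fin n → ZMod 2} :
    layerMon L a i x = 1 ↔ ∀ j, (L j : ℕ) = i → x j = a j + 1 := by
  have factor_eq_one : ∀ u v : ZMod 2, u + v = 1 ↔ u = v + 1 := by decide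
  have factor_eq_zero : ∀ u v : ZMod 2, u ≠ v + 1 → u + v = 0 := by decide
  constructor
  · intro h j hj
    by_contra hne
    rw [layerMon, Finset.prod_eq_zero (Finset.mem_filter.mpr ⟨Finset.mem_univ j, hj⟩)
      (factor_eq_zero _ _ hne)] at h
    exact zero_ne_one h
  · exact fun h => Finset.prod_eq_one fun j hj =>
      (factor_eq_one _ _).mpr (h j (Finset.mem_filter.mp hj).2)

lemma layerMon_eq_zero {i : ℕ} {x : Fin n → ZMod 2} {j : Fin n} (hj : (L j : ℕ) = i)
    (hx : x j = a j) : layerMon L a i x = 0 :=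
  Finset.prod_eq_zero (Finset.mem_filter.mpr ⟨Finset.mem_univ j, hj⟩)
    (by rw [hx, CharTwo.add_self_eq_zero])

lemma layerMon_congr {i : ℕ} {x y : Fin n → ZMod 2} (h : ∀ j, (L j : ℕ) = i → x j = y j) :
    layerMon L a i x = layerMon L a i y :=
  Finset.prod_congr rfl fun j hj => by rw [h j (Finset.mem_filter.mp hj).2]

lemma layerMon_of_le {i : ℕ} (hi : r ≤ i) : layerMon L a i = 1 := by
  funext x
  rw [layerMon, Finset.filter_false_of_mem fun j _ => by have := (L j).isLt; omega,
    Finset.prod_empty, Pi.one_apply]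

def layerNest (L : Fin n → Fin r) (a : Fin n → ZMod 2) (t s : ℕ) (x : Fin n → ZMod 2) :
    ZMod 2 :=
  nestVal (fun i => layerMon L a i x) t s

lemma layerNest_succ (t s : ℕ) (x : Fin n → ZMod 2) :
    layerNest L a (t + 1) s x = layerMon L a s x * (layerNest L a t (s + 1) x + 1) :=
  nestVal_succ _ _ _

lemma layerNest_one (s : ℕ) : layerNest L a 1 s = layerMon L a s := rfl

lemma layerNest_congr {t s : ℕ} {x y : Fin n → ZMod 2} (h : ∀ j, s ≤ (L j : ℕ) → x j = y j) :
    layerNest L a t s x = layerNest L a t s y :=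
  nestVal_congr fun _ hi _ => layerMon_congr fun j hj => h j (hj ▸ hi)

lemma layerNest_eq_zero {t s : ℕ} (ht : 1 ≤ t) {x : Fin n → ZMod 2} {j : Fin n}
    (hj : (L j : ℕ) = s) (hx : x j = a j) : layerNest L a t s x = 0 := by
  obtain ⟨t, rfl⟩ : ∃ t', t = t' + 1 := ⟨t - 1, by omega⟩
  rw [layerNest_succ, layerMon_eq_zero hj hx, zero_mul]

lemma apply_eq_add_one_of_layerNest_eq_one {t s : ℕ} {x : Fin n → ZMod 2}
    (h : layerNest L a (t + 1) s x = 1) {j : Fin n} (hj : (L j : ℕ) = s) : x j = a j + 1 := by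
  refine layerMon_eq_one_iff.mp ?_ j hj
  rw [layerNest_succ] at h
  generalize layerMon L a s x = u at h ⊢
  generalize layerNest L a t (s + 1) x + 1 = v at h
  revert u v; decide

def activateLayer (L : Fin n → Fin r) (a : Fin n → ZMod 2) (s : ℕ) (x : Fin n → ZMod 2) :
    Fin n → ZMod 2 :=
  fun j => if (L j : ℕ) = s then a j + 1 else x j

lemma layerMon_activateLayer (s : ℕ) (x : Fin n → ZMod 2) :
    layerMon L a s (activateLayer L a s x) = 1 :=
  layerMon_eq_one_iff.mpr fun _ hj => if_pos hj

lemma layerNest_succ_activateLayer (t s : ℕ) (x : Fin n → ZMod 2) :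
    layerNest L a (t + 1) s (activateLayer L a s x) = layerNest L a t (s + 1) x + 1 := by
  rw [layerNest_succ, layerMon_activateLayer, one_mul,
    layerNest_congr (x := activateLayer L a s x) (y := x) fun j hj => if_neg (by omega)]

lemma activateLayer_apply_eq {s : ℕ} {x : Fin n → ZMod 2} {j : Fin n} {v : ZMod 2}
    (hjv : (L j : ℕ) ≠ s ∨ v = a j + 1) (hx : x j = v) : activateLayer L a s x j = v := by
  unfold activateLayer
  split_ifs with hj
  · exact (hjv.resolve_left (not_not.mpr hj)).symm
  · exact hx

lemma exists_layerNest_eq_zero (hL : IsLayering L) :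
    ∀ {t s : ℕ}, s + t = r → ∀ (j : Fin n) (v : ZMod 2),
      ∃ x, x j = v ∧ layerNest L a t s x = 0
  | 0, _, _, _, v => ⟨fun _ => v, rfl, rfl⟩
  | t + 1, s, hst, j, v => by
    by_cases hj : (L j : ℕ) = s
    · rcases (by decide : ∀ u w : ZMod 2, u = w ∨ u = w + 1) v (a j) with hv | hv
      · exact ⟨fun _ => v, rfl, layerNest_eq_zero le_add_self hj hv⟩
      rcases t with _ | t
      · obtain ⟨m, hm, hmj⟩ := hL.exists_ne_of_last (j := j) (by omega)
        refine ⟨Function.update (fun _ => v) m (a m), Function.update_of_ne hmj.symm _ _, ?_⟩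
        exact layerNest_eq_zero le_add_self (hm.trans hj) (Function.update_self _ _ _)
      · obtain ⟨x, hx, hx0⟩ := exists_layerNest_eq_zero hL (t := t) (s := s + 2) (by omega) j v
        refine ⟨activateLayer L a s (activateLayer L a (s + 1) x),
          activateLayer_apply_eq (Or.inr hv) (activateLayer_apply_eq (Or.inl (by omega)) hx), ?_⟩
        rw [layerNest_succ_activateLayer, layerNest_succ_activateLayer, hx0]
        decide
    · obtain ⟨m, hm⟩ := hL.exists_mem (i := s) (by omega)
      refine ⟨Function.update (fun _ => v) m (a m),
        Function.update_of_ne (by rintro rfl; exact hj hm) _ _, ?_⟩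
      exact layerNest_eq_zero le_add_self hm (Function.update_self _ _ _)

lemma exists_layerNest_eq_one (hL : IsLayering L) {t s : ℕ} (hst : s + t = r) (ht : 1 ≤ t)
    {j : Fin n} {v : ZMod 2} (hjv : (L j : ℕ) ≠ s ∨ v = a j + 1) :
    ∃ x, x j = v ∧ layerNest L a t s x = 1 := by
  obtain ⟨t, rfl⟩ : ∃ t', t = t' + 1 := ⟨t - 1, by omega⟩
  obtain ⟨x, hx, hx0⟩ := exists_layerNest_eq_zero hL (a := a) (t := t) (s := s + 1) (by omega) j v
  exact ⟨activateLayer L a s x, activateLayer_apply_eq hjv hx,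
    by rw [layerNest_succ_activateLayer, hx0, zero_add]⟩

lemma IsLayering.layer_eq_iff_forall_apply_eq (hL : IsLayering L) {t s : ℕ} (hst : s + t = r) (ht : 1 ≤ t)
    (j : Fin n) : (L j : ℕ) = s ↔
      ∀ x y, layerNest L a t s x = 1 → layerNest L a t s y = 1 → x j = y j := by
  obtain ⟨t, rfl⟩ : ∃ t', t = t' + 1 := ⟨t - 1, by omega⟩
  refine ⟨fun hj x y hx hy => ?_, fun h => ?_⟩
  · rw [apply_eq_add_one_of_layerNest_eq_one hx hj, apply_eq_add_one_of_layerNest_eq_one hy hj]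
  · by_contra hj
    obtain ⟨x, hx, hx1⟩ := exists_layerNest_eq_one hL hst ht (Or.inl hj) (v := a j)
    obtain ⟨y, hy, hy1⟩ := exists_layerNest_eq_one hL hst ht (Or.inl hj) (v := a j + 1)
    have hxy := h x y hx1 hy1
    rw [hx, hy] at hxy
    exact (by decide : ∀ u : ZMod 2, u ≠ u + 1) _ hxy

lemma IsLayering.layerNest_eq_layerMon_iff (hL : IsLayering L) {t s : ℕ} (hst : s + t = r)
    (ht : 1 ≤ t) : layerNest L a t s = layerMon L a s ↔ t = 1 := by
  refine ⟨fun h => ?_, fun h => h ▸ layerNest_one s⟩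
  by_contra ht1
  obtain ⟨t, rfl⟩ : ∃ t', t = t' + 2 := ⟨t - 2, by omega⟩
  obtain ⟨j, hj⟩ := hL.exists_mem (i := s) (by omega)
  obtain ⟨x, -, hx⟩ := exists_layerNest_eq_one hL (t := t + 1) (s := s + 1) (by omega) (by omega)
    (Or.inl (by omega : (L j : ℕ) ≠ s + 1)) (v := 0)
  have hact := congrFun h (activateLayer L a s x)
  rw [layerNest_succ_activateLayer, hx, layerMon_activateLayer] at hact
  exact absurd hact (by decide)

end Layers

section Uniqueness

variable {n r r' : ℕ} {L : Fin n → Fin r} {a : Fin n → ZMod 2}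
  {L' : Fin n → Fin r'} {a' : Fin n → ZMod 2}

lemma layerMon_congr_layer {i : ℕ} (hlayer : ∀ j, (L j : ℕ) = i ↔ (L' j : ℕ) = i)
    (ha : ∀ j, (L j : ℕ) = i → a j = a' j) : layerMon L a i = layerMon L' a' i := by
  funext x
  exact Finset.prod_congr (Finset.filter_congr fun j _ => hlayer j)
    fun j hj => by rw [ha j ((hlayer j).mpr (Finset.mem_filter.mp hj).2)]

lemma activateLayer_congr_layer {i : ℕ} (hlayer : ∀ j, (L j : ℕ) = i ↔ (L' j : ℕ) = i)
    (ha : ∀ j, (L j : ℕ) = i → a j = a' j) : activateLayer L a i = activateLayer L' a' i := by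
  funext x j
  by_cases hj : (L j : ℕ) = i
  · simp [activateLayer, hj, (hlayer j).mp hj, ha j hj]
  · simp [activateLayer, hj, mt (hlayer j).mpr hj]

lemma layerNest_eq_of_layerNest_succ_eq {t t' s : ℕ}
    (hact : activateLayer L a s = activateLayer L' a' s)
    (h : layerNest L a (t + 1) s = layerNest L' a' (t' + 1) s) :
    layerNest L a t (s + 1) = layerNest L' a' t' (s + 1) := by
  funext x
  have hx := congrFun h (activateLayer L a s x)
  rwa [layerNest_succ_activateLayer, hact, layerNest_succ_activateLayer, add_left_inj] at hx

theorem IsLayering.layerMon_eq_of_layerNest_eq (hL : IsLayering L) (hL' : IsLayering L')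
    {t t' s : ℕ} (hst : s + t = r) (hst' : s + t' = r') (ht : 1 ≤ t) (ht' : 1 ≤ t')
    (h : layerNest L a t s = layerNest L' a' t' s) :
    t = t' ∧ ∀ i, s ≤ i → layerMon L a i = layerMon L' a' i := by
  induction t generalizing t' s with
  | zero => omega
  | succ t ih =>
    have hlayer : ∀ j, (L j : ℕ) = s ↔ (L' j : ℕ) = s := fun j => by
      rw [hL.layer_eq_iff_forall_apply_eq hst ht, hL'.layer_eq_iff_forall_apply_eq hst' ht', h]
    obtain ⟨t', rfl⟩ : ∃ u, t' = u + 1 := ⟨t' - 1, by omega⟩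
    have ha : ∀ j, (L j : ℕ) = s → a j = a' j := by
      obtain ⟨j₀, hj₀⟩ := hL.exists_mem (i := s) (by omega)
      obtain ⟨x, -, hx⟩ := exists_layerNest_eq_one hL hst ht (Or.inr rfl : _ ∨ a j₀ + 1 = a j₀ + 1)
      intro j hj
      exact add_right_cancel ((apply_eq_add_one_of_layerNest_eq_one hx hj).symm.trans
        (apply_eq_add_one_of_layerNest_eq_one (h ▸ hx) ((hlayer j).mp hj)))
    have hmon := layerMon_congr_layer hlayer ha
    have hlen : t + 1 = 1 ↔ t' + 1 = 1 := by
      rw [← hL.layerNest_eq_layerMon_iff hst ht, ← hL'.layerNest_eq_layerMon_iff hst' ht', h, hmon]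
    rcases t with _ | t
    · obtain rfl : t' = 0 := by omega
      refine ⟨rfl, fun i hi => ?_⟩
      rcases hi.eq_or_lt with rfl | hi
      · exact hmon
      · rw [layerMon_of_le (by omega), layerMon_of_le (by omega)]
    · obtain ⟨t', rfl⟩ : ∃ u, t' = u + 1 := ⟨t' - 1, by omega⟩
      obtain ⟨htt, hmons⟩ := ih (by omega) (by omega) (by omega) (by omega)
        (layerNest_eq_of_layerNest_succ_eq (activateLayer_congr_layer hlayer ha) h)
      refine ⟨by omega, fun i hi => ?_⟩
      rcases hi.eq_or_lt with rfl | hi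
      · exact hmon
      · exact hmons i hi

lemma IsLayering.eq_of_layerNest_add_eq (hL : IsLayering L) (hL' : IsLayering L') (hr' : 1 ≤ r')
    {b b' : ZMod 2} (h : ∀ x, layerNest L a r 0 x + b = layerNest L' a' r' 0 x + b') :
    b = b' := by
  obtain ⟨j, hj⟩ := hL'.exists_mem hr'
  obtain ⟨x, hx, hx0⟩ := exists_layerNest_eq_zero hL (a := a) (zero_add r) j (a' j)
  simpa [hx0, layerNest_eq_zero hr' hj hx] using h x

end Uniqueness

theorem statement6_general {n r r' : ℕ}
    (f : (Fin n → ZMod 2) → ZMod 2)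
    (L : Fin n → Fin r) (a : Fin n → ZMod 2) (b : ZMod 2)
    (L' : Fin n → Fin r') (a' : Fin n → ZMod 2) (b' : ZMod 2)
    (h : IsLayeredForm f L a b) (h' : IsLayeredForm f L' a' b') :
    r = r' ∧ b = b' ∧ ∀ i : ℕ, layerMon L a i = layerMon L' a' i := by
  obtain ⟨hr, hsize, hlast, hf⟩ := h
  obtain ⟨hr', hsize', hlast', hf'⟩ := h'
  have hL : IsLayering L := ⟨hsize, hlast⟩
  have hL' : IsLayering L' := ⟨hsize', hlast'⟩
  have hsum : ∀ x, layerNest L a r 0 x + b = layerNest L' a' r' 0 x + b' :=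
    fun x => (hf x).symm.trans (hf' x)
  obtain rfl := hL.eq_of_layerNest_add_eq hL' hr' hsum
  obtain ⟨hrr, hmon⟩ := hL.layerMon_eq_of_layerNest_eq hL' (zero_add r) (zero_add r') hr hr'
    (funext fun x => add_right_cancel (hsum x))
  exact ⟨hrr, rfl, fun i => hmon i i.zero_le⟩

/-- Uniqueness of the layered form (n ≥ 2): two layered-form representations
of the same function have the same number of layers `r`, the same constant
`b`, and the same extended monomials `Mᵢ` (as functions). -/
theorem statement6 {n r r' : ℕ} (hn : 2 ≤ n)
    (f : (Fin n → ZMod 2) → ZMod 2)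
    (L : Fin n → Fin r) (a : Fin n → ZMod 2) (b : ZMod 2)
    (L' : Fin n → Fin r') (a' : Fin n → ZMod 2) (b' : ZMod 2)
    (h : IsLayeredForm f L a b) (h' : IsLayeredForm f L' a' b') :
    r = r' ∧ b = b' ∧ ∀ i : ℕ, layerMon L a i = layerMon L' a' i :=
  statement6_general f L a b L' a' b' h h'
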